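/- For ε > 0 let S_ε = [0, ε^{-1}] × [0, ε] ⊆ ℝ², and let l_ε(s,θ) be the length of the chord L(s,θ) ∩ S_ε. Define I(p, S_ε) = ∫₀^π ∫_{-∞}^∞ l_ε(s,θ)^p ds dθ for p > 0. Then for fixed p with 1 < p < 3, I(p, S_ε) → 0 as ε → 0. -/

import Mathlib

/-!
For `θ ∈ (0, π)` with `cos θ ≠ 0`, the chord `L(s, θ) ∩ S_ε` has length at most
`M = min (ε / |cos θ|) (ε⁻¹ / sin θ)`, as it crosses both a horizontal strip of width `ε` and a
vertical strip of width `ε⁻¹`; and it is empty unless `s` lies in the projection of `S_ε` onto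
`(cos θ, sin θ)`, an interval of length `ε⁻¹ |cos θ| + ε sin θ ≤ 2 / M`. Hence
`∫ l_ε(s, θ)^p ds ≤ 2 M^(p-1)`. As `M² ≤ 1 / (|cos θ| sin θ)`, this is uniformly bounded by
`2 (|cos θ| sin θ)^((1-p)/2)`, which is integrable on `(0, π)` since `p < 3`; and `M ≤ ε / |cos θ|`
makes it tend to `0` pointwise since `p > 1`. Dominated convergence concludes.
-/

open MeasureTheory Real Set Filter
open scoped ENNReal Topology

noncomputable def pt (a b : ℝ) : EuclideanSpace ℝ (Fin 2) := WithLp.toLp 2 ![a, b]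

noncomputable def chordLen (S : Set (EuclideanSpace ℝ (Fin 2))) (s θ : ℝ) : ℝ :=
  (volume {t : ℝ |
    pt (s * Real.cos θ - t * Real.sin θ) (s * Real.sin θ + t * Real.cos θ) ∈ S}).toReal

/-- The rectangle S_ε = [0, ε⁻¹] × [0, ε]. -/
def rect (ε : ℝ) : Set (EuclideanSpace ℝ (Fin 2)) :=
  {x | x 0 ∈ Icc (0:ℝ) ε⁻¹ ∧ x 1 ∈ Icc (0:ℝ) ε}

lemma intervalIntegrable_abs_sin_rpow {r : ℝ} (hr : -1 < r) (a b : ℝ) :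
    IntervalIntegrable (fun x => |sin x| ^ r) volume a b := by
  rcases le_or_gt 0 r with hr0 | hr0
  · exact (continuous_sin.abs.rpow_const fun _ => Or.inr hr0).intervalIntegrable a b
  have hpi := pi_pos
  have h_half : IntervalIntegrable (fun x => |sin x| ^ r) volume 0 (π / 2) := by
    have hdom : IntervalIntegrable (fun x => (2 / π * x) ^ r) volume 0 (π / 2) := by
      simpa using (intervalIntegral.intervalIntegrable_rpow' hr (a := 0) (b := 1)).comp_mul_left
        (c := 2 / π) enorm_ne_top enorm_ne_top
    refine hdom.mono_fun' (continuous_sin.abs.measurable.pow_const r).aestronglyMeasurable ?_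
    rw [uIoc_of_le (by positivity), EventuallyLE, ae_restrict_iff' measurableSet_Ioc]
    refine ae_of_all _ fun x hx => ?_
    rw [norm_of_nonneg (by positivity), abs_of_nonneg (sin_nonneg_of_nonneg_of_le_pi hx.1.le
      (by linarith [hx.2]))]
    exact rpow_le_rpow_of_nonpos (by have := hx.1; positivity) (mul_le_sin hx.1.le hx.2) hr0.le
  have h_pi : IntervalIntegrable (fun x => |sin x| ^ r) volume 0 π := by
    refine h_half.trans ?_
    simpa [sin_pi_sub, sub_half] using (h_half.comp_sub_left π enorm_ne_top).symm
  exact Function.Periodic.intervalIntegrable₀ (fun x => by simp [sin_add_pi]) pi_ne_zero h_pi a b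

lemma intervalIntegrable_abs_cos_mul_abs_sin_rpow {r : ℝ} (hr : -1 < r) (a b : ℝ) :
    IntervalIntegrable (fun x => (|cos x| * |sin x|) ^ r) volume a b := by
  have h := ((intervalIntegrable_abs_sin_rpow hr (2 * a) (2 * b)).comp_mul_left (c := 2)
    enorm_ne_top enorm_ne_top).const_mul ((2 : ℝ)⁻¹ ^ r)
  have hfun : (fun x => (|cos x| * |sin x|) ^ r) = fun x => (2 : ℝ)⁻¹ ^ r * |sin (2 * x)| ^ r := by
    ext x
    rw [← mul_rpow (by norm_num) (abs_nonneg _), sin_two_mul, abs_mul, abs_mul, abs_two]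
    ring_nf
  simpa [hfun, mul_div_cancel_left₀ _ two_ne_zero] using h

lemma ae_cos_ne_zero : ∀ᵐ θ : ℝ, cos θ ≠ 0 := by
  have hzero : {θ : ℝ | cos θ = 0}.Countable :=
    (countable_range fun k : ℤ => (2 * k + 1) * π / 2).mono fun θ hθ =>
      (cos_eq_zero_iff.1 hθ).imp fun _ hk => hk.symm
  simpa [ae_iff] using hzero.measure_zero volume

lemma min_rpow_two_mul_le {a b q : ℝ} (ha : 0 ≤ a) (hb : 0 ≤ b) (hq : 0 ≤ q) :
    min a b ^ (2 * q) ≤ (a * b) ^ q := by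
  rw [rpow_mul (le_min ha hb), rpow_two]
  gcongr
  rw [sq]
  exact mul_le_mul (min_le_left a b) (min_le_right a b) (le_min ha hb) ha

lemma volume_setOf_add_mul_mem_Icc (a c lo hi : ℝ) (hc : c ≠ 0) :
    volume {t : ℝ | a + t * c ∈ Icc lo hi} = ENNReal.ofReal ((hi - lo) / |c|) := by
  change volume ((· * c) ⁻¹' ((a + ·) ⁻¹' Icc lo hi)) = _
  rw [Real.volume_preimage_mul_right hc, measure_preimage_add, Real.volume_Icc,
    ← ENNReal.ofReal_mul (abs_nonneg _), abs_inv, inv_mul_eq_div]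

lemma continuous_pt : Continuous fun q : ℝ × ℝ => pt q.1 q.2 := by
  unfold pt
  fun_prop

lemma pt_mem_rect {ε a b : ℝ} : pt a b ∈ rect ε ↔ a ∈ Icc 0 ε⁻¹ ∧ b ∈ Icc 0 ε := by
  simp [pt, rect]

lemma measurableSet_rect (ε : ℝ) : MeasurableSet (rect ε) := by
  unfold rect
  measurability

lemma chordLen_nonneg (S : Set (EuclideanSpace ℝ (Fin 2))) (s θ : ℝ) : 0 ≤ chordLen S s θ :=
  ENNReal.toReal_nonneg

lemma integral_chordLen_rpow_nonneg (S : Set (EuclideanSpace ℝ (Fin 2))) (p θ : ℝ) :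
    0 ≤ ∫ s, chordLen S s θ ^ p :=
  integral_nonneg fun s => rpow_nonneg (chordLen_nonneg S s θ) p

lemma measurable_chordLen {S : Set (EuclideanSpace ℝ (Fin 2))} (hS : MeasurableSet S) :
    Measurable fun q : ℝ × ℝ => chordLen S q.1 q.2 := by
  have hA : MeasurableSet {x : (ℝ × ℝ) × ℝ | pt (x.1.1 * cos x.1.2 - x.2 * sin x.1.2)
      (x.1.1 * sin x.1.2 + x.2 * cos x.1.2) ∈ S} :=
    (continuous_pt.comp (by fun_prop : Continuous fun x : (ℝ × ℝ) × ℝ =>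
      (x.1.1 * cos x.1.2 - x.2 * sin x.1.2, x.1.1 * sin x.1.2 + x.2 * cos x.1.2))).measurable hS
  exact (measurable_measure_prodMk_left hA).ennreal_toReal

lemma aestronglyMeasurable_integral_chordLen_rpow {S : Set (EuclideanSpace ℝ (Fin 2))}
    (hS : MeasurableSet S) (p : ℝ) (μ : Measure ℝ) :
    AEStronglyMeasurable (fun θ => ∫ s, chordLen S s θ ^ p) μ :=
  ((measurable_chordLen hS).pow_const p).stronglyMeasurable.integral_prod_left'.aestronglyMeasurable

lemma chordLen_rect_le_div_abs_cos {ε : ℝ} (hε : 0 ≤ ε) (s : ℝ) {θ : ℝ} (hθ : cos θ ≠ 0) :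
    chordLen (rect ε) s θ ≤ ε / |cos θ| := by
  refine ENNReal.toReal_le_of_le_ofReal (by positivity) ?_
  calc _ ≤ volume {t : ℝ | s * sin θ + t * cos θ ∈ Icc 0 ε} :=
        measure_mono fun t ht => (pt_mem_rect.1 ht).2
    _ = _ := by rw [volume_setOf_add_mul_mem_Icc _ _ _ _ hθ, sub_zero]

lemma chordLen_rect_le_inv_div_abs_sin {ε : ℝ} (hε : 0 ≤ ε) (s : ℝ) {θ : ℝ} (hθ : sin θ ≠ 0) :
    chordLen (rect ε) s θ ≤ ε⁻¹ / |sin θ| := by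
  refine ENNReal.toReal_le_of_le_ofReal (by positivity) ?_
  calc _ ≤ volume {t : ℝ | s * cos θ + t * -sin θ ∈ Icc 0 ε⁻¹} :=
        measure_mono fun t ht => by simpa [sub_eq_add_neg] using (pt_mem_rect.1 ht).1
    _ = _ := by rw [volume_setOf_add_mul_mem_Icc _ _ _ _ (neg_ne_zero.2 hθ), sub_zero, abs_neg]

lemma chordLen_rect_eq_zero_of_notMem {ε s θ : ℝ} (hθ : 0 ≤ sin θ)
    (hs : s ∉ Icc (min (ε⁻¹ * cos θ) 0) (max (ε⁻¹ * cos θ) 0 + ε * sin θ)) :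
    chordLen (rect ε) s θ = 0 := by
  suffices h : {t : ℝ | pt (s * cos θ - t * sin θ) (s * sin θ + t * cos θ) ∈ rect ε} = ∅ by
    simp [chordLen, h]
  refine eq_empty_of_forall_notMem fun t ht => hs ?_
  obtain ⟨hx, hy⟩ := pt_mem_rect.1 ht
  -- `s` is the projection of the point onto the direction `(cos θ, sin θ)`
  have hs_eq : s = (s * cos θ - t * sin θ) * cos θ + (s * sin θ + t * cos θ) * sin θ := by
    linear_combination -s * sin_sq_add_cos_sq θ
  have hx' : (s * cos θ - t * sin θ) * cos θ ∈ uIcc (0 * cos θ) (ε⁻¹ * cos θ) :=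
    image_mul_const_uIcc (cos θ) 0 ε⁻¹ ▸ mem_image_of_mem _ (Icc_subset_uIcc hx)
  rw [zero_mul, uIcc_comm, uIcc, mem_Icc] at hx'
  have hy' := mul_le_mul_of_nonneg_right hy.2 hθ
  constructor <;> linarith [hx'.1, hx'.2, mul_nonneg hy.1 hθ]

lemma integral_chordLen_rect_rpow_le {ε p θ : ℝ} (hε : 0 < ε) (hp : 0 < p) (hθ : θ ∈ Ioo 0 π)
    (hc : cos θ ≠ 0) :
    ∫ s, chordLen (rect ε) s θ ^ p ≤ 2 * min (ε / |cos θ|) (ε⁻¹ / sin θ) ^ (p - 1) := by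
  have hσ : 0 < sin θ := sin_pos_of_pos_of_lt_pi hθ.1 hθ.2
  set M := min (ε / |cos θ|) (ε⁻¹ / sin θ)
  have hM : 0 < M := lt_min (by positivity) (by positivity)
  set K := Icc (min (ε⁻¹ * cos θ) 0) (max (ε⁻¹ * cos θ) 0 + ε * sin θ)
  have hle : ∀ s, chordLen (rect ε) s θ ^ p ≤ K.indicator (fun _ => M ^ p) s := by
    intro s
    by_cases hs : s ∈ K
    · rw [indicator_of_mem hs]
      refine rpow_le_rpow (chordLen_nonneg _ _ _) (le_min ?_ ?_) hp.le
      · exact chordLen_rect_le_div_abs_cos hε.le s hc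
      · simpa [abs_of_pos hσ] using chordLen_rect_le_inv_div_abs_sin hε.le s hσ.ne'
    · rw [indicator_of_notMem hs, chordLen_rect_eq_zero_of_notMem hσ.le hs, zero_rpow hp.ne']
  have hK : volume.real K = ε⁻¹ * |cos θ| + ε * sin θ := by
    have hKne : min (ε⁻¹ * cos θ) 0 ≤ max (ε⁻¹ * cos θ) 0 + ε * sin θ := by
      linarith [min_le_max (a := ε⁻¹ * cos θ) (b := 0), mul_pos hε hσ]
    rw [Real.volume_real_Icc_of_le hKne, add_sub_right_comm, max_sub_min_eq_abs', sub_zero,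
      abs_mul, abs_of_pos (inv_pos.2 hε)]
  have hMc : M * (ε⁻¹ * |cos θ|) ≤ 1 := by
    calc M * (ε⁻¹ * |cos θ|) ≤ ε / |cos θ| * (ε⁻¹ * |cos θ|) := by gcongr; exact min_le_left _ _
      _ = 1 := by field_simp
  have hMs : M * (ε * sin θ) ≤ 1 := by
    calc M * (ε * sin θ) ≤ ε⁻¹ / sin θ * (ε * sin θ) := by gcongr; exact min_le_right _ _
      _ = 1 := by field_simp
  calc ∫ s, chordLen (rect ε) s θ ^ p ≤ ∫ s, K.indicator (fun _ => M ^ p) s :=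
        integral_mono_of_nonneg (ae_of_all _ fun s => rpow_nonneg (chordLen_nonneg _ _ _) p)
          ((integrable_indicator_iff measurableSet_Icc).2
            (integrableOn_const measure_Icc_lt_top.ne))
          (ae_of_all _ hle)
    _ = M ^ (p - 1) * (M * (ε⁻¹ * |cos θ|) + M * (ε * sin θ)) := by
        rw [integral_indicator_const _ measurableSet_Icc, smul_eq_mul, hK,
          ← sub_add_cancel p 1, rpow_add_one hM.ne', add_sub_cancel_right]
        ring
    _ ≤ 2 * M ^ (p - 1) := by nlinarith [rpow_pos_of_pos hM (p - 1)]

lemma integral_chordLen_rect_rpow_le_abs_cos_mul_abs_sin {ε p θ : ℝ} (hε : 0 < ε) (hp : 1 ≤ p)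
    (hθ : θ ∈ Ioo 0 π) (hc : cos θ ≠ 0) :
    ∫ s, chordLen (rect ε) s θ ^ p ≤ 2 * (|cos θ| * |sin θ|) ^ ((1 - p) / 2) := by
  have hσ : 0 < sin θ := sin_pos_of_pos_of_lt_pi hθ.1 hθ.2
  have hprod : ε / |cos θ| * (ε⁻¹ / sin θ) = (|cos θ| * |sin θ|)⁻¹ := by
    rw [abs_of_pos hσ]
    field_simp
  calc _ ≤ 2 * min (ε / |cos θ|) (ε⁻¹ / sin θ) ^ (2 * ((p - 1) / 2)) := by
        rw [mul_div_cancel₀ _ two_ne_zero]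
        exact integral_chordLen_rect_rpow_le hε (by linarith) hθ hc
    _ ≤ 2 * (|cos θ| * |sin θ|)⁻¹ ^ ((p - 1) / 2) := by
        rw [← hprod]
        gcongr
        exact min_rpow_two_mul_le (by positivity) (by positivity) (by linarith)
    _ = 2 * (|cos θ| * |sin θ|) ^ ((1 - p) / 2) := by
        rw [inv_rpow (by positivity), ← rpow_neg (by positivity)]
        congr 2
        ring

lemma tendsto_integral_chordLen_rect_rpow {p θ : ℝ} (hp : 1 < p) (hθ : θ ∈ Ioo 0 π)
    (hc : cos θ ≠ 0) :
    Tendsto (fun ε => ∫ s, chordLen (rect ε) s θ ^ p) (𝓝[>] 0) (𝓝 0) := by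
  have hp1 : 0 < p - 1 := sub_pos.2 hp
  have hlim : Tendsto (fun ε => 2 * (ε / |cos θ|) ^ (p - 1)) (𝓝[>] 0) (𝓝 0) := by
    have h : Continuous fun ε : ℝ => 2 * (ε / |cos θ|) ^ (p - 1) :=
      ((continuous_id.div_const _).rpow_const fun _ => Or.inr hp1.le).const_mul 2
    simpa [zero_rpow hp1.ne'] using (h.tendsto 0).mono_left (nhdsWithin_le_nhds (s := Ioi 0))
  refine tendsto_of_tendsto_of_tendsto_of_le_of_le' tendsto_const_nhds hlim
    (Eventually.of_forall fun ε => integral_chordLen_rpow_nonneg _ _ _) ?_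
  filter_upwards [self_mem_nhdsWithin] with ε (hε : 0 < ε)
  refine (integral_chordLen_rect_rpow_le hε (by linarith) hθ hc).trans ?_
  have hσ : 0 < sin θ := sin_pos_of_pos_of_lt_pi hθ.1 hθ.2
  gcongr
  exact min_le_left _ _

/-- for 1 < p < 3, I(p, S_ε) = ∫₀^π ∫ l_ε(s,θ)^p ds dθ → 0
as ε → 0⁺. -/
theorem stmt17 (p : ℝ) (hp : 1 < p) (hp3 : p < 3) :
    Tendsto (fun ε : ℝ =>
        ∫ θ in Ioo (0:ℝ) π, ∫ s : ℝ, (chordLen (rect ε) s θ) ^ p)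
      (𝓝[>] 0) (𝓝 0) := by
  have hdom : IntegrableOn (fun θ => 2 * (|cos θ| * |sin θ|) ^ ((1 - p) / 2)) (Ioo 0 π) :=
    (intervalIntegrable_iff_integrableOn_Ioo_of_le pi_pos.le).1
      ((intervalIntegrable_abs_cos_mul_abs_sin_rpow (by linarith) 0 π).const_mul 2)
  have h_ae : ∀ᵐ θ ∂volume.restrict (Ioo 0 π), θ ∈ Ioo 0 π ∧ cos θ ≠ 0 :=
    (ae_restrict_mem measurableSet_Ioo).and (ae_restrict_of_ae ae_cos_ne_zero)
  have h_bound : ∀ᶠ ε in 𝓝[>] 0, ∀ᵐ θ ∂volume.restrict (Ioo 0 π),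
      ‖∫ s, chordLen (rect ε) s θ ^ p‖ ≤ 2 * (|cos θ| * |sin θ|) ^ ((1 - p) / 2) := by
    filter_upwards [self_mem_nhdsWithin] with ε (hε : 0 < ε)
    filter_upwards [h_ae] with θ ⟨hθ, hc⟩
    rw [norm_of_nonneg (integral_chordLen_rpow_nonneg _ _ _)]
    exact integral_chordLen_rect_rpow_le_abs_cos_mul_abs_sin hε hp.le hθ hc
  simpa using tendsto_integral_filter_of_dominated_convergence _
    (Eventually.of_forall fun ε => aestronglyMeasurable_integral_chordLen_rpow
      (measurableSet_rect ε) p _)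
    h_bound hdom (h_ae.mono fun θ ⟨hθ, hc⟩ => tendsto_integral_chordLen_rect_rpow hp hθ hc)
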